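/- Let X be a finite nonempty token set, τ > 0, c > 0, n ≥ 1, and let logits be an arbitrary function from finite token sequences over X to ℝ^X. Let S and S' be neighboring finite multisets of token sequences with |S| ≥ 3 and |S'| ≥ 3. For a sequence y = (y_1, …, y_n) ∈ X^n and 1 ≤ t ≤ n, let y_{<t} = (y_1, …, y_{t−1}), let Z_t be the multiset {clip_c(logits(s · y_{<t})) : s ∈ S} (with multiplicity, one vector per element of S, where s · y_{<t} denotes concatenation), let Z'_t be defined analogously from S', and set P(y) = Π_{t=1}^n softmax_τ(med(Z_t))(y_t) and P'(y) = Π_{t=1}^n softmax_τ(med(Z'_t))(y_t). Then for every y ∈ X^n, Π_{t=1}^n α(Z_t, y_t) ≤ P(y)/P'(y) ≤ Π_{t=1}^n β(Z_t, y_t). -/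

import Mathlib

open Real

/-- The left-median of a finite multiset of reals (see context):
    for sorted values `s_1 ≤ … ≤ s_N`, this is `s_k` when `N = 2k` or `N = 2k+1` (`N ≥ 2`),
    and `s_1` when `N = 1`. (0-indexed: `N/2 - 1`.) -/
noncomputable def leftmed (S : Multiset ℝ) : ℝ :=
  if S.card = 1 then (S.sort (· ≤ ·)).getD 0 0
  else (S.sort (· ≤ ·)).getD (S.card / 2 - 1) 0

/-- The right-median: `s_{k+1}` when `N = 2k`, `s_{k+2}` when `N = 2k+1 ≥ 3`, `s_1` when `N = 1`. -/
noncomputable def rightmed (S : Multiset ℝ) : ℝ :=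
  if S.card = 1 then (S.sort (· ≤ ·)).getD 0 0
  else if S.card % 2 = 0 then (S.sort (· ≤ ·)).getD (S.card / 2) 0
  else (S.sort (· ≤ ·)).getD (S.card / 2 + 1) 0

/-- The median: `(s_k + s_{k+1})/2` when `N = 2k`, `s_{k+1}` when `N = 2k+1`. -/
noncomputable def med (S : Multiset ℝ) : ℝ :=
  if S.card = 1 then (S.sort (· ≤ ·)).getD 0 0
  else if S.card % 2 = 0 then
    ((S.sort (· ≤ ·)).getD (S.card / 2 - 1) 0 + (S.sort (· ≤ ·)).getD (S.card / 2) 0) / 2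
  else (S.sort (· ≤ ·)).getD (S.card / 2) 0
/-- Two finite multisets are neighbors if one is obtained from the other by adding a single
    element (equivalently their symmetric difference has size 1). -/
def Neighbors {α : Type*} (Z Z' : Multiset α) : Prop :=
  (∃ a, Z' = a ::ₘ Z) ∨ (∃ a, Z = a ::ₘ Z')

/-- The multiset `Z^{(x)}` of `x`-th components of a multiset of vectors. -/
def compAt {X : Type*} (Z : Multiset (X → ℝ)) (x : X) : Multiset ℝ :=
  Z.map (fun z => z x)

/-- Componentwise left-median of a multiset of vectors. -/
noncomputable def leftmedVec {X : Type*} (Z : Multiset (X → ℝ)) : X → ℝ :=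
  fun x => leftmed (compAt Z x)

/-- Componentwise median of a multiset of vectors. -/
noncomputable def medVec {X : Type*} (Z : Multiset (X → ℝ)) : X → ℝ :=
  fun x => med (compAt Z x)

/-- Componentwise right-median of a multiset of vectors. -/
noncomputable def rightmedVec {X : Type*} (Z : Multiset (X → ℝ)) : X → ℝ :=
  fun x => rightmed (compAt Z x)
/-- `softmax_τ(z)(x) = exp(z_x/τ) / Σ_y exp(z_y/τ)`. -/
noncomputable def softmax {X : Type*} [Fintype X] (τ : ℝ) (z : X → ℝ) (x : X) : ℝ :=
  Real.exp (z x / τ) / ∑ y, Real.exp (z y / τ)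
/-- `clip_c(z)_i = max(−c, z_i − max_j z_j + c)`. -/
noncomputable def clip {X : Type*} [Fintype X] [Nonempty X] (c : ℝ) (z : X → ℝ) (i : X) : ℝ :=
  max (-c) (z i - Finset.univ.sup' Finset.univ_nonempty z + c)
/-- `α(Z, x) = exp((z̄_x − z̄^R_x)/τ) · (Σ_y exp(z̄^L_y/τ)) / (Σ_y exp(z̄_y/τ))`
    where `z̄ = med(Z)`, `z̄^L = leftmed(Z)`, `z̄^R = rightmed(Z)`. -/
noncomputable def alpha {X : Type*} [Fintype X] (τ : ℝ) (Z : Multiset (X → ℝ)) (x : X) : ℝ :=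
  Real.exp ((medVec Z x - rightmedVec Z x) / τ) *
    (∑ y, Real.exp (leftmedVec Z y / τ)) / (∑ y, Real.exp (medVec Z y / τ))

/-- `β(Z, x) = exp((z̄_x − z̄^L_x)/τ) · (Σ_y exp(z̄^R_y/τ)) / (Σ_y exp(z̄_y/τ))`. -/
noncomputable def beta {X : Type*} [Fintype X] (τ : ℝ) (Z : Multiset (X → ℝ)) (x : X) : ℝ :=
  Real.exp ((medVec Z x - leftmedVec Z x) / τ) *
    (∑ y, Real.exp (rightmedVec Z y / τ)) / (∑ y, Real.exp (medVec Z y / τ))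

/-- Per-token privacy cost `γ(Z, x) = max(log(1/α(Z, x)), log β(Z, x))`. -/
noncomputable def gamma {X : Type*} [Fintype X] (τ : ℝ) (Z : Multiset (X → ℝ)) (x : X) : ℝ :=
  max (Real.log (1 / alpha τ Z x)) (Real.log (beta τ Z x))

/-! Adding one element to a multiset of reals shifts each order statistic by at most one
position: if `t` is the sorted list of `a ::ₘ T` and `s` that of `T`, then
`t[i] ≤ s[i] ≤ t[i+1]`. Hence the median of any neighbor of `T` lies between the left- and
right-median of `T`. Applied coordinatewise, this bounds both the numerator and the partition
function of the neighbor's softmax, which gives `α ≤ P/P' ≤ β` for each token; the bound for a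
sequence is the product over the steps. -/

namespace List

variable {α : Type*} [Preorder α] {s t : List α} (d : α)

theorem Pairwise.getD_le_getD (ht : t.Pairwise (· ≤ ·)) {i j : ℕ} (hij : i ≤ j)
    (hj : j < t.length) : t.getD i d ≤ t.getD j d := by
  rw [getD_eq_getElem _ _ (hij.trans_lt hj), getD_eq_getElem _ _ hj]
  exact ht.sortedLE.getElem_le_getElem_of_le hij

theorem Sublist.getD_le_getD_of_pairwise (hst : s <+ t) (ht : t.Pairwise (· ≤ ·)) :
    ∀ i < s.length, t.getD i d ≤ s.getD i d := by
  induction hst with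
  | slnil => simp
  | @cons s t a hst ih =>
    rintro (_ | i) hi
    · rw [getD_cons_zero, getD_eq_getElem _ _ hi]
      exact rel_of_pairwise_cons ht (hst.subset (getElem_mem hi))
    · rw [getD_cons_succ]
      exact (ht.of_cons.getD_le_getD d i.le_succ (hi.trans_le hst.length_le)).trans
        (ih ht.of_cons (i + 1) hi)
  | @cons_cons s t a _ ih =>
    rintro (_ | i) hi
    · simp
    · simpa using ih ht.of_cons i (by simpa using hi)

theorem Sublist.getD_le_getD_succ_of_pairwise (hst : s <+ t) (ht : t.Pairwise (· ≤ ·))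
    (hlen : t.length = s.length + 1) : ∀ i < s.length, s.getD i d ≤ t.getD (i + 1) d := by
  induction hst with
  | slnil => simp
  | @cons s t a hst _ =>
    obtain rfl : s = t := hst.eq_of_length (by simpa using hlen.symm)
    simp
  | @cons_cons s t a _ ih =>
    rintro (_ | i) hi
    · have ht0 : 0 < t.length := by simp at hlen; omega
      rw [getD_cons_zero, getD_cons_succ, getD_eq_getElem _ _ ht0]
      exact rel_of_pairwise_cons ht (getElem_mem ht0)
    · simpa using ih ht.of_cons (by simpa using hlen) i (by simpa using hi)

end List

namespace Multiset

variable {α : Type*} [LinearOrder α] (d : α) (a : α) (T : Multiset α)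

theorem sort_sublist_sort_cons : (T.sort (· ≤ ·)).Sublist ((a ::ₘ T).sort (· ≤ ·)) := by
  refine List.sublist_of_subperm_of_pairwise ?_ (pairwise_sort _ _) (pairwise_sort _ _)
  rw [← coe_le, sort_eq, sort_eq]
  exact le_cons_self T a

theorem getD_sort_cons_le {i : ℕ} (hi : i < T.card) :
    ((a ::ₘ T).sort (· ≤ ·)).getD i d ≤ (T.sort (· ≤ ·)).getD i d :=
  (sort_sublist_sort_cons a T).getD_le_getD_of_pairwise d (pairwise_sort _ _) i
    (by rwa [length_sort])

theorem getD_sort_le_getD_sort_cons_succ {i : ℕ} (hi : i < T.card) :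
    (T.sort (· ≤ ·)).getD i d ≤ ((a ::ₘ T).sort (· ≤ ·)).getD (i + 1) d :=
  (sort_sublist_sort_cons a T).getD_le_getD_succ_of_pairwise d (pairwise_sort _ _)
    (by simp) i (by rwa [length_sort])

end Multiset

section Medians

variable {S : Multiset ℝ}

theorem leftmed_eq_getD (hS : 2 ≤ S.card) :
    leftmed S = (S.sort (· ≤ ·)).getD (S.card / 2 - 1) 0 := by
  rw [leftmed, if_neg (by omega)]

theorem rightmed_eq_getD (hS : 2 ≤ S.card) :
    rightmed S = (S.sort (· ≤ ·)).getD (S.card - S.card / 2) 0 := by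
  rw [rightmed, if_neg (by omega)]
  split_ifs <;> congr 1 <;> omega

theorem med_mem_Icc (hS : S ≠ 0) :
    med S ∈ Set.Icc ((S.sort (· ≤ ·)).getD ((S.card - 1) / 2) 0)
      ((S.sort (· ≤ ·)).getD (S.card / 2) 0) := by
  have hcard : 0 < S.card := Multiset.card_pos.mpr hS
  rw [med]
  split_ifs with h1 h2
  · simp [h1]
  · have hle := (S.pairwise_sort (· ≤ ·)).getD_le_getD 0 (i := S.card / 2 - 1) (j := S.card / 2)
      (by omega) (by rw [Multiset.length_sort]; omega)
    rw [show (S.card - 1) / 2 = S.card / 2 - 1 by omega]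
    constructor <;> linarith
  · rw [show (S.card - 1) / 2 = S.card / 2 by omega]
    exact ⟨le_rfl, le_rfl⟩

theorem med_mem_Icc_of_neighbors {T T' : Multiset ℝ} (h : Neighbors T T') (hT : 2 ≤ T.card) :
    med T' ∈ Set.Icc (leftmed T) (rightmed T) := by
  rcases h with ⟨a, rfl⟩ | ⟨a, rfl⟩
  · have hmed := med_mem_Icc (Multiset.cons_ne_zero : a ::ₘ T ≠ 0)
    simp only [Multiset.card_cons, add_tsub_cancel_right] at hmed
    rw [leftmed_eq_getD hT, rightmed_eq_getD hT]
    constructor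
    · have := Multiset.getD_sort_le_getD_sort_cons_succ 0 a T (i := T.card / 2 - 1) (by omega)
      rw [show T.card / 2 - 1 + 1 = T.card / 2 by omega] at this
      exact this.trans hmed.1
    · have := Multiset.getD_sort_cons_le 0 a T (i := (T.card + 1) / 2) (by omega)
      rw [show (T.card + 1) / 2 = T.card - T.card / 2 by omega] at this hmed
      exact hmed.2.trans this
  · have hmed := med_mem_Icc (S := T') (by rintro rfl; simp at hT)
    rw [leftmed_eq_getD hT, rightmed_eq_getD hT, Multiset.card_cons]
    rw [Multiset.card_cons] at hT
    constructor
    · have := Multiset.getD_sort_cons_le 0 a T' (i := (T'.card - 1) / 2) (by omega)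
      rw [show (T'.card + 1) / 2 - 1 = (T'.card - 1) / 2 by omega]
      exact this.trans hmed.1
    · have := Multiset.getD_sort_le_getD_sort_cons_succ 0 a T' (i := T'.card / 2) (by omega)
      rw [show T'.card + 1 - (T'.card + 1) / 2 = T'.card / 2 + 1 by omega]
      exact hmed.2.trans this

end Medians

theorem Neighbors.map {α β : Type*} {Z Z' : Multiset α} (h : Neighbors Z Z') (f : α → β) :
    Neighbors (Z.map f) (Z'.map f) := by
  rcases h with ⟨a, rfl⟩ | ⟨a, rfl⟩
  · exact Or.inl ⟨f a, Multiset.map_cons f a Z⟩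
  · exact Or.inr ⟨f a, Multiset.map_cons f a Z'⟩

theorem medVec_mem_Icc_of_neighbors {X : Type*} {Z Z' : Multiset (X → ℝ)} (h : Neighbors Z Z')
    (hZ : 2 ≤ Z.card) (x : X) : medVec Z' x ∈ Set.Icc (leftmedVec Z x) (rightmedVec Z x) :=
  med_mem_Icc_of_neighbors (h.map fun z => z x) (by rwa [compAt, Multiset.card_map])

section Softmax

variable {X : Type*} [Fintype X] {τ : ℝ}

theorem softmax_pos [Nonempty X] (z : X → ℝ) (x : X) : 0 < softmax τ z x := by
  unfold softmax
  positivity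

theorem alpha_pos [Nonempty X] (Z : Multiset (X → ℝ)) (x : X) : 0 < alpha τ Z x := by
  unfold alpha
  positivity

theorem softmax_div_softmax (z w : X → ℝ) (x : X) :
    softmax τ z x / softmax τ w x =
      exp ((z x - w x) / τ) * (∑ y, exp (w y / τ)) / ∑ y, exp (z y / τ) := by
  rw [softmax, softmax, div_div_div_comm, div_div_eq_mul_div, ← exp_sub, ← sub_div]

variable {Z : Multiset (X → ℝ)} {w : X → ℝ}

theorem alpha_le_softmax_div_softmax (hτ : 0 < τ)
    (hw : ∀ y, w y ∈ Set.Icc (leftmedVec Z y) (rightmedVec Z y)) (x : X) :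
    alpha τ Z x ≤ softmax τ (medVec Z) x / softmax τ w x := by
  rw [softmax_div_softmax, alpha]
  gcongr with y
  · exact (hw x).2
  · exact (hw y).1

theorem softmax_div_softmax_le_beta (hτ : 0 < τ)
    (hw : ∀ y, w y ∈ Set.Icc (leftmedVec Z y) (rightmedVec Z y)) (x : X) :
    softmax τ (medVec Z) x / softmax τ w x ≤ beta τ Z x := by
  rw [softmax_div_softmax, beta]
  gcongr with y
  · exact (hw x).1
  · exact (hw y).2

end Softmax

theorem generation_ratio_alpha_beta_bounds_general
    {X : Type*} [Fintype X] [Nonempty X] (τ : ℝ) (hτ : 0 < τ) (c : ℝ)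
    (n : ℕ) (logits : List X → (X → ℝ))
    (S S' : Multiset (List X)) (hSS' : Neighbors S S')
    (hS : 3 ≤ S.card)
    (y : Fin n → X) (Z Z' : Fin n → Multiset (X → ℝ))
    (hZ : ∀ t : Fin n, Z t = S.map (fun s => clip c (logits (s ++ (List.ofFn y).take t.val))))
    (hZ' : ∀ t : Fin n, Z' t = S'.map (fun s => clip c (logits (s ++ (List.ofFn y).take t.val)))) :
    (∏ t : Fin n, alpha τ (Z t) (y t))
        ≤ (∏ t : Fin n, softmax τ (medVec (Z t)) (y t)) /
            (∏ t : Fin n, softmax τ (medVec (Z' t)) (y t)) ∧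
    (∏ t : Fin n, softmax τ (medVec (Z t)) (y t)) /
        (∏ t : Fin n, softmax τ (medVec (Z' t)) (y t))
      ≤ ∏ t : Fin n, beta τ (Z t) (y t) := by
  have hmed (t : Fin n) (x : X) :
      medVec (Z' t) x ∈ Set.Icc (leftmedVec (Z t) x) (rightmedVec (Z t) x) := by
    refine medVec_mem_Icc_of_neighbors ?_ ?_ x
    · rw [hZ t, hZ' t]
      exact hSS'.map _
    · rw [hZ t, Multiset.card_map]
      omega
  rw [← Finset.prod_div_distrib]
  exact ⟨Finset.prod_le_prod (fun t _ => (alpha_pos _ _).le)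
      fun t _ => alpha_le_softmax_div_softmax hτ (hmed t) _,
    Finset.prod_le_prod (fun t _ => (div_pos (softmax_pos _ _) (softmax_pos _ _)).le)
      fun t _ => softmax_div_softmax_le_beta hτ (hmed t) _⟩

/-- Let `logits` be an arbitrary function from token sequences to logit
    vectors, and `S, S'` neighboring multisets of seed sequences with `|S| ≥ 3`, `|S'| ≥ 3`.
    For an output sequence `y ∈ X^n`, with per-step clipped logit multisets
    `Z_t = {clip_c(logits(s · y_{<t})) : s ∈ S}` (and `Z'_t` from `S'`), the per-step
    output probabilities `P(y) = Π_t softmax_τ(med(Z_t))(y_t)` and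
    `P'(y) = Π_t softmax_τ(med(Z'_t))(y_t)` satisfy
    `Π_t α(Z_t, y_t) ≤ P(y)/P'(y) ≤ Π_t β(Z_t, y_t)`. -/
theorem generation_ratio_alpha_beta_bounds
    {X : Type*} [Fintype X] [Nonempty X] (τ : ℝ) (hτ : 0 < τ) (c : ℝ) (hc : 0 < c)
    (n : ℕ) (hn : 1 ≤ n) (logits : List X → (X → ℝ))
    (S S' : Multiset (List X)) (hSS' : Neighbors S S')
    (hS : 3 ≤ S.card) (hS' : 3 ≤ S'.card)
    (y : Fin n → X) (Z Z' : Fin n → Multiset (X → ℝ))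
    (hZ : ∀ t : Fin n, Z t = S.map (fun s => clip c (logits (s ++ (List.ofFn y).take t.val))))
    (hZ' : ∀ t : Fin n, Z' t = S'.map (fun s => clip c (logits (s ++ (List.ofFn y).take t.val)))) :
    (∏ t : Fin n, alpha τ (Z t) (y t))
        ≤ (∏ t : Fin n, softmax τ (medVec (Z t)) (y t)) /
            (∏ t : Fin n, softmax τ (medVec (Z' t)) (y t)) ∧
    (∏ t : Fin n, softmax τ (medVec (Z t)) (y t)) /
        (∏ t : Fin n, softmax τ (medVec (Z' t)) (y t))
      ≤ ∏ t : Fin n, beta τ (Z t) (y t) :=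
  generation_ratio_alpha_beta_bounds_general τ hτ c n logits S S' hSS' hS y Z Z' hZ hZ'
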